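/- For h = 0 and J → 1⁺, the positive solution μ₀(J) of μ₀ = tanh(J μ₀) satisfies μ₀(J)² ~ 3(1 - 1/J); consequently the second derivative with respect to J of the limiting pressure, equal to (1/2) d(μ₀²)/dJ for J > 1 and 0 for J ≤ 1, is discontinuous at J = 1 (second-order phase transition). -/

import Mathlib

/-!
With x = J μ₀(J), the mean-field equation reads J = x / tanh x. This is a strictly increasing
function of x > 0 tending to 1 as x → 0⁺, so x → 0⁺ as J → 1⁺, and
μ₀² / (3 (1 - 1/J)) = tanh² x / (3 (1 - tanh x / x)) → 1 because x - tanh x ~ x³ / 3.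
The inverse function theorem makes μ₀ differentiable for J > 1. If (1/2) d(μ₀²)/dJ were
continuous at 1 it would tend to 0 as J → 1⁺, and L'Hôpital's rule would then give
μ₀² / (3 (1 - 1/J)) → 0, contradicting the limit 1.
-/

open Real Filter Set Topology

namespace Real

theorem tanh_pos {x : ℝ} (hx : 0 < x) : 0 < tanh x := by
  rw [tanh_eq_sinh_div_cosh]
  exact div_pos (sinh_pos_iff.mpr hx) (cosh_pos x)

theorem one_sub_tanh_sq (x : ℝ) : 1 - tanh x ^ 2 = (cosh x ^ 2)⁻¹ := by
  have := cosh_pos x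
  rw [tanh_eq_sinh_div_cosh]
  field_simp
  linarith [cosh_sq_sub_sinh_sq x]

theorem hasStrictDerivAt_tanh (x : ℝ) : HasStrictDerivAt tanh (1 - tanh x ^ 2) x := by
  have h := (hasStrictDerivAt_sinh x).fun_div (hasStrictDerivAt_cosh x) (cosh_pos x).ne'
  rw [← funext tanh_eq_sinh_div_cosh] at h
  refine h.congr_deriv ?_
  rw [one_sub_tanh_sq, ← one_div, ← cosh_sq_sub_sinh_sq x]
  ring

theorem hasDerivAt_tanh (x : ℝ) : HasDerivAt tanh (1 - tanh x ^ 2) x :=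
  (hasStrictDerivAt_tanh x).hasDerivAt

@[fun_prop]
theorem continuous_tanh : Continuous tanh :=
  continuous_iff_continuousAt.mpr fun x => (hasDerivAt_tanh x).continuousAt

theorem tanh_lt_self {x : ℝ} (hx : 0 < x) : tanh x < x := by
  have hmono : StrictMonoOn (fun y => y - tanh y) (Ici 0) := by
    refine strictMonoOn_of_hasDerivWithinAt_pos (convex_Ici 0) (by fun_prop)
      (fun y _ => ((hasDerivAt_id y).sub (hasDerivAt_tanh y)).hasDerivWithinAt) fun y hy => ?_
    rw [interior_Ici] at hy
    have := tanh_pos hy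
    simp only [sub_sub_cancel]
    positivity
  simpa [tanh_zero] using hmono self_mem_Ici hx.le hx

theorem tendsto_tanh_div_self : Tendsto (fun x => tanh x / x) (𝓝[≠] 0) (𝓝 1) :=
  (hasDerivAt_iff_tendsto_slope.mp (hasDerivAt_tanh 0)).congr
    (fun x => by simp [slope_def_field]) |>.trans (by simp)

theorem tendsto_sub_tanh_div_pow_three :
    Tendsto (fun x => (x - tanh x) / x ^ 3) (𝓝[>] 0) (𝓝 (1 / 3)) := by
  refine HasDerivAt.lhopital_zero_nhdsGT (f' := fun x => tanh x ^ 2) (g' := fun x => 3 * x ^ 2)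
    (.of_forall fun x => ?_) (.of_forall fun x => ?_) ?_ ?_ ?_ ?_
  · exact ((hasDerivAt_id x).sub (hasDerivAt_tanh x)).congr_deriv (by simp)
  · simpa using hasDerivAt_pow 3 x
  · filter_upwards [self_mem_nhdsWithin] with x hx
    exact mul_ne_zero three_ne_zero (pow_ne_zero 2 (ne_of_gt hx))
  · exact ((by fun_prop : Continuous fun x => x - tanh x).tendsto' 0 0 (by simp)).mono_left
      nhdsWithin_le_nhds
  · exact ((continuous_pow 3).tendsto' 0 0 (by simp)).mono_left nhdsWithin_le_nhds
  · have h := (tendsto_tanh_div_self.mono_left (nhdsGT_le_nhdsNE 0)).pow 2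
    exact ((h.div_const 3).congr fun x => by ring).trans (by norm_num)

theorem tendsto_tanh_sq_div_one_sub_tanh_div_self :
    Tendsto (fun x => tanh x ^ 2 / (3 * (1 - tanh x / x))) (𝓝[>] 0) (𝓝 1) := by
  have h := ((tendsto_tanh_div_self.mono_left (nhdsGT_le_nhdsNE 0)).pow 2).div
    (tendsto_sub_tanh_div_pow_three.const_mul 3) (by norm_num)
  refine (h.congr' ?_).trans (by norm_num)
  filter_upwards [self_mem_nhdsWithin] with x hx
  have hx : x ≠ 0 := ne_of_gt hx
  simp only [Pi.div_apply]
  field_simp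

theorem mul_one_sub_tanh_sq_lt_tanh {x : ℝ} (hx : 0 < x) : x * (1 - tanh x ^ 2) < tanh x := by
  have hc := cosh_pos x
  have h : 2 * x < 2 * sinh x * cosh x := sinh_two_mul x ▸ self_lt_sinh_iff.mpr (by positivity)
  rw [one_sub_tanh_sq, tanh_eq_sinh_div_cosh, ← sub_pos]
  have : sinh x / cosh x - x * (cosh x ^ 2)⁻¹ = (sinh x * cosh x - x) / cosh x ^ 2 := by
    field_simp
  rw [this]
  exact div_pos (by linarith) (by positivity)

theorem hasStrictDerivAt_div_tanh {x : ℝ} (hx : 0 < x) :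
    HasStrictDerivAt (fun y => y / tanh y) ((tanh x - x * (1 - tanh x ^ 2)) / tanh x ^ 2) x :=
  ((hasStrictDerivAt_id x).fun_div (hasStrictDerivAt_tanh x) (tanh_pos hx).ne').congr_deriv
    (by simp)

theorem strictMonoOn_div_tanh : StrictMonoOn (fun x => x / tanh x) (Ioi 0) := by
  refine strictMonoOn_of_hasDerivWithinAt_pos (convex_Ioi 0)
    (f' := fun x => (tanh x - x * (1 - tanh x ^ 2)) / tanh x ^ 2)
    (fun x hx => (hasStrictDerivAt_div_tanh hx).hasDerivAt.continuousAt.continuousWithinAt)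
    (fun x hx => ?_) fun x hx => ?_ <;> rw [interior_Ioi] at hx
  · exact (hasStrictDerivAt_div_tanh hx).hasDerivAt.hasDerivWithinAt
  · have := tanh_pos hx
    exact div_pos (sub_pos.mpr (mul_one_sub_tanh_sq_lt_tanh hx)) (by positivity)

theorem one_lt_div_tanh {x : ℝ} (hx : 0 < x) : 1 < x / tanh x :=
  (one_lt_div (tanh_pos hx)).mpr (tanh_lt_self hx)

end Real

section InverseOfDivTanh

variable {X : ℝ → ℝ}

theorem tendsto_nhdsGT_zero_of_div_tanh_eq
    (hX : ∀ J, 1 < J → 0 < X J ∧ X J / tanh (X J) = J) : Tendsto X (𝓝[>] 1) (𝓝[>] 0) := by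
  have hpos : ∀ᶠ J in 𝓝[>] 1, X J ∈ Ioi 0 :=
    eventually_nhdsWithin_of_forall fun J hJ => (hX J hJ).1
  refine tendsto_nhdsWithin_iff.mpr
    ⟨tendsto_order.mpr ⟨fun a ha => hpos.mono fun J hJ => ha.trans hJ, fun ε hε => ?_⟩, hpos⟩
  filter_upwards [Ioo_mem_nhdsGT (one_lt_div_tanh hε)] with J ⟨hJ, hJε⟩
  by_contra! h
  have := strictMonoOn_div_tanh.monotoneOn hε (hX J hJ).1 h
  simp only [(hX J hJ).2] at this
  linarith

theorem differentiableAt_of_div_tanh_eq (hX : ∀ J, 1 < J → 0 < X J ∧ X J / tanh (X J) = J)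
    {K : ℝ} (hK : 1 < K) : DifferentiableAt ℝ X K := by
  obtain ⟨hx, hXK⟩ := hX K hK
  have hinv : ∀ᶠ y in 𝓝 (X K), X (y / tanh y) = y := by
    filter_upwards [Ioi_mem_nhds hx] with y hy
    have h := hX _ (one_lt_div_tanh hy)
    exact strictMonoOn_div_tanh.injOn h.1 hy h.2
  have ht := tanh_pos hx
  have h := (hasStrictDerivAt_div_tanh hx).to_local_left_inverse
    (div_pos (sub_pos.mpr (mul_one_sub_tanh_sq_lt_tanh hx)) (by positivity)).ne' hinv
  rw [hXK] at h
  exact h.hasDerivAt.differentiableAt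

end InverseOfDivTanh

def IsPosMeanFieldSolution (μ : ℝ → ℝ) : Prop :=
  ∀ J : ℝ, 1 < J → 0 < μ J ∧ μ J = tanh (J * μ J)

namespace IsPosMeanFieldSolution

variable {μ : ℝ → ℝ}

theorem mul_div_tanh_mul_eq (hμ : IsPosMeanFieldSolution μ) (J : ℝ) (hJ : 1 < J) :
    0 < J * μ J ∧ J * μ J / tanh (J * μ J) = J := by
  obtain ⟨hpos, heq⟩ := hμ J hJ
  refine ⟨mul_pos (by linarith) hpos, ?_⟩
  rw [← heq]
  field_simp

theorem tendsto_mul (hμ : IsPosMeanFieldSolution μ) :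
    Tendsto (fun J => J * μ J) (𝓝[>] 1) (𝓝[>] 0) :=
  tendsto_nhdsGT_zero_of_div_tanh_eq hμ.mul_div_tanh_mul_eq

theorem tendsto_sq_div (hμ : IsPosMeanFieldSolution μ) :
    Tendsto (fun J => μ J ^ 2 / (3 * (1 - 1 / J))) (𝓝[>] 1) (𝓝 1) := by
  refine (tendsto_tanh_sq_div_one_sub_tanh_div_self.comp hμ.tendsto_mul).congr'
    (eventually_nhdsWithin_of_forall fun J hJ => ?_)
  obtain ⟨hpos, heq⟩ := hμ J hJ
  have hJ0 : J ≠ 0 := by linarith [mem_Ioi.mp hJ]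
  simp only [Function.comp_apply, ← heq]
  field_simp

theorem tendsto_sq (hμ : IsPosMeanFieldSolution μ) :
    Tendsto (fun J => μ J ^ 2) (𝓝[>] 1) (𝓝 0) := by
  have h := ((continuous_tanh.tendsto' 0 0 tanh_zero).comp
    (hμ.tendsto_mul.mono_right nhdsWithin_le_nhds)).pow 2
  refine (h.congr' (eventually_nhdsWithin_of_forall fun J hJ => ?_)).trans (by norm_num)
  simp [← (hμ J hJ).2]

theorem differentiableAt (hμ : IsPosMeanFieldSolution μ) {K : ℝ} (hK : 1 < K) :
    DifferentiableAt ℝ μ K := by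
  have h := (hasDerivAt_tanh _).differentiableAt.comp K
    (differentiableAt_of_div_tanh_eq hμ.mul_div_tanh_mul_eq hK)
  refine h.congr_of_eventuallyEq ?_
  filter_upwards [Ioi_mem_nhds hK] with J hJ using (hμ J hJ).2

end IsPosMeanFieldSolution

theorem tendsto_div_three_mul_one_sub_inv {f : ℝ → ℝ} {l : ℝ}
    (hf : ∀ᶠ J in 𝓝[>] 1, DifferentiableAt ℝ f J) (hf0 : Tendsto f (𝓝[>] 1) (𝓝 0))
    (hf' : Tendsto (deriv f) (𝓝[>] 1) (𝓝 l)) :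
    Tendsto (fun J => f J / (3 * (1 - 1 / J))) (𝓝[>] 1) (𝓝 (l / 3)) := by
  have hg : ∀ J : ℝ, 1 < J → HasDerivAt (fun J => 3 * (1 - 1 / J)) (3 / J ^ 2) J := by
    intro J hJ
    have := ((hasDerivAt_inv (by positivity : J ≠ 0)).const_sub 1).const_mul 3
    simpa [one_div, div_eq_mul_inv] using this
  have hg0 : ContinuousAt (fun J : ℝ => 3 * (1 - 1 / J)) 1 := by fun_prop (disch := norm_num)
  have hg' : ContinuousAt (fun J : ℝ => 3 / J ^ 2) 1 := by fun_prop (disch := norm_num)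
  refine HasDerivAt.lhopital_zero_nhdsGT (hf.mono fun J hJ => hJ.hasDerivAt)
    (eventually_nhdsWithin_of_forall hg)
    (eventually_nhdsWithin_of_forall fun J (hJ : 1 < J) => by
      have : 0 < J := by linarith
      positivity)
    hf0 (by simpa using hg0.tendsto.mono_left nhdsWithin_le_nhds) ?_
  have h3 : Tendsto (fun J : ℝ => 3 / J ^ 2) (𝓝[>] 1) (𝓝 3) := by
    simpa using hg'.tendsto.mono_left nhdsWithin_le_nhds
  exact hf'.div h3 three_ne_zero

theorem stmt_10 (μ₀ : ℝ → ℝ)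
    (hμ₀ : ∀ J : ℝ, 1 < J → 0 < μ₀ J ∧ μ₀ J = Real.tanh (J * μ₀ J))
    (p2 : ℝ → ℝ)
    (hp2 : ∀ J : ℝ, p2 J = if 1 < J then (1 / 2) * deriv (fun J' => μ₀ J' ^ 2) J else 0) :
    Tendsto (fun J : ℝ => μ₀ J ^ 2 / (3 * (1 - 1 / J))) (nhdsWithin 1 (Set.Ioi 1)) (nhds 1) ∧
    ¬ ContinuousAt p2 1 := by
  have hratio := IsPosMeanFieldSolution.tendsto_sq_div hμ₀
  refine ⟨hratio, fun hcont => ?_⟩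
  have hderiv : Tendsto (deriv fun J => μ₀ J ^ 2) (𝓝[>] 1) (𝓝 0) := by
    have h := (hcont.tendsto.mono_left (nhdsWithin_le_nhds (s := Ioi 1))).const_mul 2
    rw [hp2 1, if_neg (lt_irrefl 1), mul_zero] at h
    refine h.congr' (eventually_nhdsWithin_of_forall fun J (hJ : 1 < J) => ?_)
    rw [hp2, if_pos hJ]
    ring
  have hdiff : ∀ᶠ J in 𝓝[>] 1, DifferentiableAt ℝ (fun J => μ₀ J ^ 2) J :=
    eventually_nhdsWithin_of_forall fun J hJ =>
      (IsPosMeanFieldSolution.differentiableAt hμ₀ hJ).pow 2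
  have hlim := tendsto_div_three_mul_one_sub_inv hdiff
    (IsPosMeanFieldSolution.tendsto_sq hμ₀) hderiv
  exact zero_ne_one (tendsto_nhds_unique (by simpa using hlim) hratio)
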